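/- arXiv:2310.13616 — 2 statements merged into one kernel-verified Lean document; each statement's English description precedes it below -/
import Mathlib

section
/- There exists a periodic graph 𝒢 = ⟨G_0,…,G_8⟩ of period 9 on 9 vertices such that every snapshot G_i is a path (hence copwin), the footprint G is copwin (it has a universal vertex), but c(𝒢) = 2. In particular, the inequality c(𝒢) ≤ max(c(G), max_i c(G_i)) is false in general. -/
/-- The closed neighbourhood of `u` in `G` (contains `u` itself, modelling
reflexive graphs / the option of standing still). -/
def cN {V : Type*} (G : SimpleGraph V) (u : V) : Set V := insert u {v | G.Adj u v}

/-- A periodic temporal graph: a `p`-periodic sequence of snapshots on a common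
vertex set `V`. -/
structure PeriodicGraph (V : Type*) where
  p : ℕ
  p_pos : 0 < p
  snap : ℕ → SimpleGraph V
  periodic : ∀ t, snap (t + p) = snap t

namespace PeriodicGraph

variable {V : Type*}

/-- A strategy for `k` cops: initial positions and a move function
(depending on the round, current cop positions and robber position). -/
structure CopStrategy (𝒢 : PeriodicGraph V) (k : ℕ) where
  init : Fin k → V
  move : ℕ → (Fin k → V) → V → (Fin k → V)

/-- A strategy for the robber: an initial position (chosen after seeing the
cops' initial positions) and a move function (depending on the round, the
cops' positions after their move, and the robber's position). -/
structure RobStrategy (𝒢 : PeriodicGraph V) (k : ℕ) where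
  init : (Fin k → V) → V
  move : ℕ → (Fin k → V) → V → V

/-- A cop strategy is legal if every move stays in the closed neighbourhood
of the current position in the current snapshot. -/
def CopStrategy.Legal {𝒢 : PeriodicGraph V} {k : ℕ} (σ : CopStrategy 𝒢 k) : Prop :=
  ∀ t c r i, σ.move t c r i ∈ cN (𝒢.snap t) (c i)

/-- A robber strategy is legal if every move stays in the closed neighbourhood
of the current position in the current snapshot. -/
def RobStrategy.Legal {𝒢 : PeriodicGraph V} {k : ℕ} (ρ : RobStrategy 𝒢 k) : Prop :=
  ∀ t c r, ρ.move t c r ∈ cN (𝒢.snap t) r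

/-- The positions (cops, robber) at the start of round `t` of the play
determined by the two strategies.  In round `t` the cops move first, then the
robber, both along the snapshot `𝒢.snap t`. -/
def play {𝒢 : PeriodicGraph V} {k : ℕ} (σ : CopStrategy 𝒢 k) (ρ : RobStrategy 𝒢 k) :
    ℕ → (Fin k → V) × V
  | 0 => (σ.init, ρ.init σ.init)
  | t + 1 =>
    (σ.move t (play σ ρ t).1 (play σ ρ t).2,
     ρ.move t (σ.move t (play σ ρ t).1 (play σ ρ t).2) (play σ ρ t).2)

/-- The robber is captured: at some point a cop occupies the robber's vertex,
either at the start of a round or right after the cops' move in a round. -/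
def Captured {𝒢 : PeriodicGraph V} {k : ℕ} (σ : CopStrategy 𝒢 k) (ρ : RobStrategy 𝒢 k) :
    Prop :=
  ∃ t i, (play σ ρ t).1 i = (play σ ρ t).2 ∨ (play σ ρ (t + 1)).1 i = (play σ ρ t).2

/-- `k` cops have a winning strategy on `𝒢`. -/
def CopsWin (𝒢 : PeriodicGraph V) (k : ℕ) : Prop :=
  ∃ σ : CopStrategy 𝒢 k, σ.Legal ∧ ∀ ρ : RobStrategy 𝒢 k, ρ.Legal → Captured σ ρ

/-- The cop number of a periodic graph: the least `k` such that `k` cops win. -/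
noncomputable def copNumber (𝒢 : PeriodicGraph V) : ℕ := sInf {k | 𝒢.CopsWin k}

/-- The footprint of a periodic graph: the union of all snapshots. -/
def footprint (𝒢 : PeriodicGraph V) : SimpleGraph V := ⨆ t, 𝒢.snap t

/-- The induced periodic subgraph on a set `S` of vertices. -/
def restrict (𝒢 : PeriodicGraph V) (S : Set V) : PeriodicGraph S where
  p := 𝒢.p
  p_pos := 𝒢.p_pos
  snap t := SimpleGraph.induce S (𝒢.snap t)
  periodic t := congrArg (SimpleGraph.induce S) (𝒢.periodic t)

/-- A static graph, seen as a periodic graph of period 1. -/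
def ofStatic (G : SimpleGraph V) : PeriodicGraph V :=
  ⟨1, Nat.one_pos, fun _ => G, fun _ => rfl⟩

end PeriodicGraph

/-- The cop number of a static (reflexive) graph. -/
noncomputable def copNumberS {V : Type*} (G : SimpleGraph V) : ℕ :=
  (PeriodicGraph.ofStatic G).copNumber

/-- `G` is a path graph: its vertices can be enumerated so that adjacency is
exactly consecutiveness. -/
def IsPathGraph {V : Type*} [Fintype V] (G : SimpleGraph V) : Prop :=
  ∃ e : Fin (Fintype.card V) ≃ V,
    ∀ i j, G.Adj (e i) (e j) ↔ ((i : ℕ) + 1 = j ∨ (j : ℕ) + 1 = i)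

/-! ### Auxiliary development for Statement 16 -/

namespace PG16

open PeriodicGraph

lemma mem_cN {V : Type*} (G : SimpleGraph V) (u v : V) :
    v ∈ cN G u ↔ v = u ∨ G.Adj u v := by
  simp [cN, Set.mem_insert_iff]

lemma not_copsWin_zero {V : Type*} [Nonempty V] (𝒢 : PeriodicGraph V) : ¬ 𝒢.CopsWin 0 := by
  rintro ⟨σ, -, h⟩
  obtain ⟨v⟩ := ‹Nonempty V›
  obtain ⟨t, i, -⟩ := h ⟨fun _ => v, fun _ _ r => r⟩
    (fun t c r => (mem_cN _ _ _).mpr (Or.inl rfl))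
  exact i.elim0

lemma copNumber_eq_one {V : Type*} (𝒢 : PeriodicGraph V) (h1 : 𝒢.CopsWin 1)
    (h0 : ¬ 𝒢.CopsWin 0) : 𝒢.copNumber = 1 := by
  have hle : 𝒢.copNumber ≤ 1 := Nat.sInf_le h1
  have hmem : 𝒢.copNumber ∈ {k | 𝒢.CopsWin k} := Nat.sInf_mem ⟨1, h1⟩
  have h0' : 𝒢.copNumber ≠ 0 := fun h => h0 (h ▸ hmem)
  omega

lemma copNumber_eq_two {V : Type*} (𝒢 : PeriodicGraph V) (h2 : 𝒢.CopsWin 2)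
    (h1 : ¬ 𝒢.CopsWin 1) (h0 : ¬ 𝒢.CopsWin 0) : 𝒢.copNumber = 2 := by
  have hle : 𝒢.copNumber ≤ 2 := Nat.sInf_le h2
  have hmem : 𝒢.copNumber ∈ {k | 𝒢.CopsWin k} := Nat.sInf_mem ⟨2, h2⟩
  have h0' : 𝒢.copNumber ≠ 0 := fun h => h0 (h ▸ hmem)
  have h1' : 𝒢.copNumber ≠ 1 := fun h => h1 (h ▸ hmem)
  omega

section Universal

variable {V : Type*} (G : SimpleGraph V) (v : V)

open scoped Classical in
/-- The one-cop strategy from a universal vertex: start there and grab the robber. -/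
noncomputable def uniStrat : CopStrategy (ofStatic G) 1 where
  init := fun _ => v
  move := fun _ c r i => if r = c i ∨ G.Adj (c i) r then r else c i

lemma uniStrat_move_grab (t : ℕ) (c : Fin 1 → V) (r : V) (i : Fin 1)
    (h : r = c i ∨ G.Adj (c i) r) : (uniStrat G v).move t c r i = r := by
  simp only [uniStrat]
  rw [if_pos h]

lemma uniStrat_move_stay (t : ℕ) (c : Fin 1 → V) (r : V) (i : Fin 1)
    (h : ¬(r = c i ∨ G.Adj (c i) r)) : (uniStrat G v).move t c r i = c i := by
  simp only [uniStrat]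
  rw [if_neg h]

lemma uniStrat_legal : (uniStrat G v).Legal := by
  intro t c r i
  by_cases h : r = c i ∨ G.Adj (c i) r
  · rw [uniStrat_move_grab G v t c r i h]
    exact (mem_cN _ _ _).mpr h
  · rw [uniStrat_move_stay G v t c r i h]
    exact (mem_cN _ _ _).mpr (Or.inl rfl)

lemma copsWin_one_of_universal (hv : ∀ w, w ≠ v → G.Adj v w) :
    (ofStatic G).CopsWin 1 := by
  refine ⟨uniStrat G v, uniStrat_legal G v, ?_⟩
  intro ρ hρ
  by_cases h : ρ.init (uniStrat G v).init = v
  · exact ⟨0, 0, Or.inl h.symm⟩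
  · refine ⟨0, 0, Or.inr ?_⟩
    have e : (play (uniStrat G v) ρ 1).1 0
        = (uniStrat G v).move 0 (uniStrat G v).init (ρ.init (uniStrat G v).init) 0 := rfl
    rw [e]
    exact uniStrat_move_grab G v 0 _ _ 0 (Or.inr (hv _ h))

end Universal

section Sweep

/-- The sweeping strategy along a path enumeration. -/
noncomputable def sweepStrat (G : SimpleGraph (Fin 9)) (ε : Fin 9 ≃ Fin 9) :
    CopStrategy (ofStatic G) 1 where
  init := fun _ => ε ⟨0, by omega⟩
  move := fun _ c _ i => ε ⟨min ((ε.symm (c i) : ℕ) + 1) 8, by omega⟩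

/-- One cop sweeps a path on `Fin 9` from one end to the other. -/
lemma copsWin_one_of_path (G : SimpleGraph (Fin 9)) (hG : IsPathGraph G) :
    (ofStatic G).CopsWin 1 := by
  classical
  obtain ⟨e, he⟩ := hG
  set ε : Fin 9 ≃ Fin 9 := (finCongr (by simp : (9:ℕ) = Fintype.card (Fin 9))).trans e with hε
  have he' : ∀ i j : Fin 9, G.Adj (ε i) (ε j) ↔ ((i : ℕ) + 1 = j ∨ (j : ℕ) + 1 = i) := by
    intro i j
    have := he (finCongr (by simp : (9:ℕ) = Fintype.card (Fin 9)) i)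
      (finCongr (by simp : (9:ℕ) = Fintype.card (Fin 9)) j)
    simpa [hε, Fin.coe_cast] using this
  set σ : CopStrategy (ofStatic G) 1 := sweepStrat G ε with hσdef
  have hleg : σ.Legal := by
    intro t c r i
    obtain ⟨k, hk⟩ : ∃ k, c i = ε k := ⟨ε.symm (c i), (ε.apply_symm_apply _).symm⟩
    have e1 : σ.move t c r i = ε ⟨min ((ε.symm (c i) : ℕ) + 1) 8, by omega⟩ := rfl
    have e2 : σ.move t c r i = ε ⟨min ((k : ℕ) + 1) 8, by omega⟩ := by
      rw [e1]
      refine congrArg ε (Fin.ext ?_)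
      show min ((ε.symm (c i) : ℕ) + 1) 8 = min ((k : ℕ) + 1) 8
      rw [hk, Equiv.symm_apply_apply]
    rw [e2, hk]
    by_cases h : (k : ℕ) < 8
    · refine (mem_cN _ _ _).mpr (Or.inr ?_)
      refine (he' k ⟨min ((k : ℕ) + 1) 8, by omega⟩).mpr (Or.inl ?_)
      show (k : ℕ) + 1 = min ((k : ℕ) + 1) 8
      omega
    · refine (mem_cN _ _ _).mpr (Or.inl ?_)
      refine congrArg ε (Fin.ext ?_)
      show min ((k : ℕ) + 1) 8 = (k : ℕ)
      have := k.isLt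
      omega
  refine ⟨σ, hleg, ?_⟩
  intro ρ hρ
  by_contra hnc
  have noCap : ∀ t, (play σ ρ t).1 0 ≠ (play σ ρ t).2 ∧
      (play σ ρ (t+1)).1 0 ≠ (play σ ρ t).2 :=
    fun t => ⟨fun h => hnc ⟨t, 0, Or.inl h⟩, fun h => hnc ⟨t, 0, Or.inr h⟩⟩
  have copPos : ∀ t, (play σ ρ t).1 0 = ε ⟨min t 8, by omega⟩ := by
    intro t
    induction t with
    | zero =>
      show ε ⟨0, by omega⟩ = ε ⟨min 0 8, by omega⟩
      exact congrArg ε (Fin.ext (by show (0:ℕ) = min 0 8; omega))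
    | succ t ih =>
      have e1 : (play σ ρ (t+1)).1 0
          = ε ⟨min ((ε.symm ((play σ ρ t).1 0) : ℕ) + 1) 8, by omega⟩ := rfl
      rw [e1]
      refine congrArg ε (Fin.ext ?_)
      show min ((ε.symm ((play σ ρ t).1 0) : ℕ) + 1) 8 = min (t+1) 8
      rw [ih, Equiv.symm_apply_apply]
      show min (min t 8 + 1) 8 = min (t+1) 8
      omega
  have hrstep : ∀ t, ((ε.symm ((play σ ρ (t+1)).2)) : ℕ) = (ε.symm ((play σ ρ t).2) : ℕ) ∨
      (ε.symm ((play σ ρ t).2) : ℕ) + 1 = (ε.symm ((play σ ρ (t+1)).2) : ℕ) ∨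
      (ε.symm ((play σ ρ (t+1)).2) : ℕ) + 1 = (ε.symm ((play σ ρ t).2) : ℕ) := by
    intro t
    have e2 : (play σ ρ (t+1)).2
        = ρ.move t (σ.move t (play σ ρ t).1 (play σ ρ t).2) ((play σ ρ t).2) := rfl
    have hm : (play σ ρ (t+1)).2 ∈ cN G ((play σ ρ t).2) := by
      rw [e2]; exact hρ t _ _
    rcases (mem_cN _ _ _).mp hm with h | h
    · left; rw [h]
    · right
      exact (he' (ε.symm ((play σ ρ t).2)) (ε.symm ((play σ ρ (t+1)).2))).mp
        (by rw [Equiv.apply_symm_apply, Equiv.apply_symm_apply]; exact h)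
  have inv : ∀ t, t ≤ 8 → t < (ε.symm ((play σ ρ t).2) : ℕ) := by
    intro t
    induction t with
    | zero =>
      intro _
      rcases Nat.eq_zero_or_pos (ε.symm ((play σ ρ 0).2) : ℕ) with h | h
      · exfalso
        apply (noCap 0).1
        rw [copPos 0]
        have h2 : ε.symm ((play σ ρ 0).2) = ⟨min 0 8, by omega⟩ :=
          Fin.ext (by show (ε.symm ((play σ ρ 0).2) : ℕ) = min 0 8; omega)
        rw [← h2, Equiv.apply_symm_apply]
      · exact h
    | succ t ih =>
      intro ht
      have ht8 : t < 8 := by omega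
      have iht := ih (by omega)
      have hc1 : (play σ ρ (t+1)).1 0 = ε ⟨t+1, by omega⟩ := by
        rw [copPos (t+1)]
        exact congrArg ε (Fin.ext (by show min (t+1) 8 = t+1; omega))
      have hbne : (ε.symm ((play σ ρ t).2) : ℕ) ≠ t+1 := by
        intro hnt
        apply (noCap t).2
        rw [hc1]
        have h2 : ε.symm ((play σ ρ t).2) = ⟨t+1, by omega⟩ :=
          Fin.ext (by show (ε.symm ((play σ ρ t).2) : ℕ) = t+1; omega)
        rw [← h2, Equiv.apply_symm_apply]
      have hane : (ε.symm ((play σ ρ (t+1)).2) : ℕ) ≠ t+1 := by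
        intro hnt
        apply (noCap (t+1)).1
        rw [hc1]
        have h2 : ε.symm ((play σ ρ (t+1)).2) = ⟨t+1, by omega⟩ :=
          Fin.ext (by show (ε.symm ((play σ ρ (t+1)).2) : ℕ) = t+1; omega)
        rw [← h2, Equiv.apply_symm_apply]
      have := hrstep t
      omega
  have h8 := inv 8 le_rfl
  have := (ε.symm ((play σ ρ 8).2)).isLt
  omega

end Sweep

/-! ### The concrete periodic graph -/

def ordT : Fin 9 → Fin 9 → Fin 9 :=
  ![![5,8,7,4,1,2,6,3,0],
    ![4,3,6,5,1,2,8,7,0],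
    ![7,1,4,5,0,3,2,6,8],
    ![1,6,2,3,7,4,5,8,0],
    ![6,5,0,1,7,8,3,2,4],
    ![2,0,6,8,7,5,4,3,1],
    ![3,6,7,5,0,1,4,8,2],
    ![0,3,7,2,1,5,4,6,8],
    ![4,3,7,2,6,5,0,8,1]]

def posT : Fin 9 → Fin 9 → Fin 9 :=
  ![![8,4,5,7,3,0,6,2,1],
    ![8,4,5,1,0,3,2,7,6],
    ![4,1,6,5,2,3,7,0,8],
    ![8,0,2,3,5,6,1,4,7],
    ![2,3,7,6,8,1,0,4,5],
    ![1,8,0,7,6,5,2,4,3],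
    ![4,5,8,0,6,3,1,2,7],
    ![0,4,3,1,6,5,7,2,8],
    ![6,8,3,1,0,5,4,2,7]]

def adjP (τ u v : Fin 9) : Prop :=
  (posT τ u : ℕ) + 1 = (posT τ v : ℕ) ∨ (posT τ v : ℕ) + 1 = (posT τ u : ℕ)

instance (τ u v : Fin 9) : Decidable (adjP τ u v) := by unfold adjP; infer_instance

def P (τ : Fin 9) : SimpleGraph (Fin 9) where
  Adj u v := adjP τ u v
  symm := ⟨fun u v h => Or.symm h⟩
  loopless := ⟨fun v h => by rcases h with h | h <;> omega⟩

instance (τ : Fin 9) : DecidableRel (P τ).Adj := fun u v =>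
  inferInstanceAs (Decidable (adjP τ u v))

def τn (t : ℕ) : Fin 9 := ⟨t % 9, Nat.mod_lt _ (by norm_num)⟩

def GG : PeriodicGraph (Fin 9) where
  p := 9
  p_pos := by norm_num
  snap t := P (τn t)
  periodic t := congrArg P (Fin.ext (by simp [τn]))

lemma τn_succ (t : ℕ) : τn (t + 1) = τn t + 1 := by
  apply Fin.ext
  simp [τn, Fin.add_def, Nat.add_mod]

lemma snap_eq (t : ℕ) : GG.snap t = P (τn t) := rfl

lemma snap_succ_eq (t : ℕ) : GG.snap (t+1) = P (τn t + 1) := by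
  show P (τn (t+1)) = P (τn t + 1)
  rw [τn_succ]

/-! decidable combinatorial facts about the snapshots -/

lemma ord_pos : ∀ τ i : Fin 9, posT τ (ordT τ i) = i := by decide

lemma adj_ord (τ a b : Fin 9) :
    (P τ).Adj (ordT τ a) (ordT τ b) ↔ ((a : ℕ) + 1 = b ∨ (b : ℕ) + 1 = a) := by
  show adjP τ _ _ ↔ _
  unfold adjP
  rw [ord_pos, ord_pos]

lemma pos_ord : ∀ τ v : Fin 9, ordT τ (posT τ v) = v := by decide

def εP (τ : Fin 9) : Fin 9 ≃ Fin 9 where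
  toFun := ordT τ
  invFun := posT τ
  left_inv := fun i => ord_pos τ i
  right_inv := fun v => pos_ord τ v

lemma εP_apply (τ x : Fin 9) : εP τ x = ordT τ x := rfl

lemma isPath_P (τ : Fin 9) : IsPathGraph (P τ) := by
  refine ⟨(finCongr (by simp : Fintype.card (Fin 9) = 9)).trans (εP τ), ?_⟩
  intro i j
  simp only [Equiv.trans_apply, finCongr_apply, εP_apply, adj_ord]
  simp [Fin.coe_cast]

lemma noCorner : ∀ τ u v : Fin 9, v ≠ u →
    ∃ w : Fin 9, (w = v ∨ (P τ).Adj v w) ∧ ¬(w = u ∨ (P (τ+1)).Adj u w) := by decide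

lemma initEscape : ∀ u : Fin 9, ∃ v : Fin 9, ¬(v = u ∨ (P (τn 0)).Adj u v) := by decide

lemma univ8 : ∀ w : Fin 9, w ≠ 8 → ∃ τ : Fin 9, (P τ).Adj 8 w := by decide

def xT : Fin 9 → Fin 9 := ![0,0,0,5,5,0,0,0,0]
def yT : Fin 9 → Fin 9 := fun _ => 8

def XY : Fin 2 → Fin 9 → Fin 9 := ![xT, yT]

def F : Fin 9 → Fin 9 → ℕ :=
  ![![0,6,6,0,6,0,6,0,0],
    ![0,5,0,5,5,5,0,0,0],
    ![0,4,4,0,4,0,0,4,0],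
    ![0,3,3,3,0,0,3,3,0],
    ![0,2,2,0,2,0,0,0,0],
    ![0,1,0,1,1,10,0,0,0],
    ![0,0,0,0,0,0,9,9,0],
    ![0,8,8,0,8,8,0,8,0],
    ![0,0,7,7,7,0,7,7,0]]

lemma trajLegal : ∀ (i : Fin 2) (τ : Fin 9),
    XY i (τ+1) = XY i τ ∨ (P τ).Adj (XY i τ) (XY i (τ+1)) := by decide

def evade (τ v : Fin 9) : Prop := ∀ i : Fin 2, ¬(v = XY i τ ∨ (P τ).Adj (XY i τ) v)

instance (τ v : Fin 9) : Decidable (evade τ v) := by unfold evade; infer_instance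

lemma rankLemma : ∀ τ v : Fin 9, evade τ v → ∀ w, (w = v ∨ (P τ).Adj v w) →
    evade (τ+1) w → F (τ+1) w < F τ v := by decide

/-! ### Two cops win on `GG` -/

open scoped Classical in
noncomputable def copStrat2 : CopStrategy GG 2 where
  init := fun i => XY i (τn 0)
  move := fun t c r i =>
    if r = c i ∨ (GG.snap t).Adj (c i) r then r
    else if XY i (τn (t+1)) = c i ∨ (GG.snap t).Adj (c i) (XY i (τn (t+1))) then XY i (τn (t+1))
    else c i

lemma copStrat2_move_grab (t : ℕ) (c : Fin 2 → Fin 9) (r : Fin 9) (i : Fin 2)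
    (h : r = c i ∨ (GG.snap t).Adj (c i) r) : copStrat2.move t c r i = r := by
  simp only [copStrat2]
  rw [if_pos h]

lemma copStrat2_move_traj (t : ℕ) (c : Fin 2 → Fin 9) (r : Fin 9) (i : Fin 2)
    (h1 : ¬(r = c i ∨ (GG.snap t).Adj (c i) r))
    (h2 : XY i (τn (t+1)) = c i ∨ (GG.snap t).Adj (c i) (XY i (τn (t+1)))) :
    copStrat2.move t c r i = XY i (τn (t+1)) := by
  simp only [copStrat2]
  rw [if_neg h1, if_pos h2]

lemma copStrat2_legal : copStrat2.Legal := by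
  intro t c r i
  by_cases h1 : r = c i ∨ (GG.snap t).Adj (c i) r
  · rw [copStrat2_move_grab t c r i h1]
    exact (mem_cN _ _ _).mpr h1
  · by_cases h2 : XY i (τn (t+1)) = c i ∨ (GG.snap t).Adj (c i) (XY i (τn (t+1)))
    · rw [copStrat2_move_traj t c r i h1 h2]
      exact (mem_cN _ _ _).mpr h2
    · have e1 : copStrat2.move t c r i = c i := by
        simp only [copStrat2]
        rw [if_neg h1, if_neg h2]
      rw [e1]
      exact (mem_cN _ _ _).mpr (Or.inl rfl)

lemma copsWin_two : GG.CopsWin 2 := by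
  refine ⟨copStrat2, copStrat2_legal, ?_⟩
  intro ρ hρ
  by_contra hnc
  have noCap : ∀ t i, (play copStrat2 ρ t).1 i ≠ (play copStrat2 ρ t).2 ∧
      (play copStrat2 ρ (t+1)).1 i ≠ (play copStrat2 ρ t).2 :=
    fun t i => ⟨fun h => hnc ⟨t, i, Or.inl h⟩, fun h => hnc ⟨t, i, Or.inr h⟩⟩
  have inv : ∀ t, (∀ i, (play copStrat2 ρ t).1 i = XY i (τn t)) ∧
      evade (τn t) (play copStrat2 ρ t).2 := by
    intro t
    induction t with
    | zero =>
      refine ⟨fun i => rfl, ?_⟩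
      by_contra hbad
      unfold evade at hbad
      push_neg at hbad
      obtain ⟨i, hi⟩ := hbad
      apply (noCap 0 i).2
      have e2 : (play copStrat2 ρ 1).1 i
          = copStrat2.move 0 (play copStrat2 ρ 0).1 (play copStrat2 ρ 0).2 i := rfl
      rw [e2]
      refine copStrat2_move_grab 0 _ _ i ?_
      exact hi
    | succ t ih =>
      have copPart : ∀ i, (play copStrat2 ρ (t+1)).1 i = XY i (τn (t+1)) := by
        intro i
        have e2 : (play copStrat2 ρ (t+1)).1 i
            = copStrat2.move t (play copStrat2 ρ t).1 (play copStrat2 ρ t).2 i := rfl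
        rw [e2]
        refine copStrat2_move_traj t _ _ i ?_ ?_
        · rw [ih.1 i]
          exact ih.2 i
        · rw [ih.1 i, τn_succ]
          exact trajLegal i (τn t)
      refine ⟨copPart, ?_⟩
      by_contra hbad
      unfold evade at hbad
      push_neg at hbad
      obtain ⟨i, hi⟩ := hbad
      apply (noCap (t+1) i).2
      have e2 : (play copStrat2 ρ (t+2)).1 i
          = copStrat2.move (t+1) (play copStrat2 ρ (t+1)).1 (play copStrat2 ρ (t+1)).2 i := rfl
      rw [e2]
      refine copStrat2_move_grab (t+1) _ _ i ?_
      rw [copPart i]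
      exact hi
  have dec : ∀ t, F (τn (t+1)) ((play copStrat2 ρ (t+1)).2) + 1
      ≤ F (τn t) ((play copStrat2 ρ t).2) := by
    intro t
    have h1 := (inv t).2
    have h2 := (inv (t+1)).2
    have e3 : (play copStrat2 ρ (t+1)).2
        = ρ.move t (copStrat2.move t (play copStrat2 ρ t).1 (play copStrat2 ρ t).2)
            ((play copStrat2 ρ t).2) := rfl
    have hm : (play copStrat2 ρ (t+1)).2 ∈ cN (GG.snap t) ((play copStrat2 ρ t).2) := by
      rw [e3]; exact hρ t _ _
    rw [τn_succ] at h2 ⊢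
    exact rankLemma (τn t) _ h1 _ ((mem_cN _ _ _).mp hm) h2
  have mono : ∀ t, F (τn t) ((play copStrat2 ρ t).2) + t
      ≤ F (τn 0) ((play copStrat2 ρ 0).2) := by
    intro t
    induction t with
    | zero => omega
    | succ t ih =>
      have := dec t
      omega
  have := mono (F (τn 0) ((play copStrat2 ρ 0).2) + 1)
  omega

/-! ### One cop does not win on `GG` -/

open scoped Classical in
noncomputable def robStrat (σ : CopStrategy GG 1) : RobStrategy GG 1 where
  init := fun c => if h : ∃ v : Fin 9, v ∉ cN (GG.snap 0) (c 0) then h.choose else c 0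
  move := fun t c r =>
    if h : ∃ w, w ∈ cN (GG.snap t) r ∧ w ∉ cN (GG.snap (t+1)) (c 0) then h.choose else r

lemma robStrat_init_spec (σ : CopStrategy GG 1) (c : Fin 1 → Fin 9)
    (h : ∃ v : Fin 9, v ∉ cN (GG.snap 0) (c 0)) :
    (robStrat σ).init c ∉ cN (GG.snap 0) (c 0) := by
  simp only [robStrat]
  rw [dif_pos h]
  exact h.choose_spec

lemma robStrat_move_spec (σ : CopStrategy GG 1) (t : ℕ) (c : Fin 1 → Fin 9) (r : Fin 9)
    (h : ∃ w, w ∈ cN (GG.snap t) r ∧ w ∉ cN (GG.snap (t+1)) (c 0)) :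
    (robStrat σ).move t c r ∉ cN (GG.snap (t+1)) (c 0) := by
  simp only [robStrat]
  rw [dif_pos h]
  exact h.choose_spec.2

lemma robStrat_legal (σ : CopStrategy GG 1) : (robStrat σ).Legal := by
  intro t c r
  simp only [RobStrategy.Legal, robStrat]
  split_ifs with h
  · exact h.choose_spec.1
  · exact (mem_cN _ _ _).mpr (Or.inl rfl)

lemma not_copsWin_one : ¬ GG.CopsWin 1 := by
  rintro ⟨σ, hσ, hwin⟩
  obtain ⟨t0, i, hcap⟩ := hwin (robStrat σ) (robStrat_legal σ)
  have i0 : i = 0 := Subsingleton.elim _ _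
  subst i0
  have inv : ∀ t, (play σ (robStrat σ) t).2
      ∉ cN (GG.snap t) ((play σ (robStrat σ) t).1 0) := by
    intro t
    induction t with
    | zero =>
      have hex : ∃ v : Fin 9, v ∉ cN (GG.snap 0) (σ.init 0) := by
        obtain ⟨v, hv⟩ := initEscape (σ.init 0)
        exact ⟨v, fun hm => hv ((mem_cN _ _ _).mp hm)⟩
      exact robStrat_init_spec σ σ.init hex
    | succ t ih =>
      have hc' : σ.move t (play σ (robStrat σ) t).1 (play σ (robStrat σ) t).2 0
          ∈ cN (GG.snap t) ((play σ (robStrat σ) t).1 0) := hσ t _ _ 0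
      have hne : (play σ (robStrat σ) t).2
          ≠ σ.move t (play σ (robStrat σ) t).1 (play σ (robStrat σ) t).2 0 :=
        fun h => ih (h ▸ hc')
      have hex : ∃ w, w ∈ cN (GG.snap t) ((play σ (robStrat σ) t).2) ∧
          w ∉ cN (GG.snap (t+1))
            (σ.move t (play σ (robStrat σ) t).1 (play σ (robStrat σ) t).2 0) := by
        obtain ⟨w, hw1, hw2⟩ := noCorner (τn t) _ _ hne
        refine ⟨w, (mem_cN _ _ _).mpr hw1, ?_⟩
        rw [snap_succ_eq]
        exact fun hm => hw2 ((mem_cN _ _ _).mp hm)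
      exact robStrat_move_spec σ t _ _ hex
  rcases hcap with h | h
  · exact inv t0 (h ▸ (mem_cN _ _ _).mpr (Or.inl rfl))
  · have hmem : (play σ (robStrat σ) (t0+1)).1 0
        ∈ cN (GG.snap t0) ((play σ (robStrat σ) t0).1 0) := hσ t0 _ _ 0
    rw [h] at hmem
    exact inv t0 hmem

lemma footprint_univ : ∀ w : Fin 9, w ≠ 8 → GG.footprint.Adj 8 w := by
  intro w hw
  obtain ⟨τ, hτ⟩ := univ8 w hw
  refine SimpleGraph.iSup_adj.mpr ⟨(τ : ℕ), ?_⟩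
  show (P (τn (τ : ℕ))).Adj 8 w
  rwa [show τn (τ : ℕ) = τ from Fin.ext (Nat.mod_eq_of_lt τ.isLt)]

end PG16
/-- There is a periodic graph of period 9 on 9 vertices whose
snapshots are all paths (hence copwin), whose footprint has a universal vertex
(hence is copwin), but whose cop number is 2.  In particular
`c(𝒢) ≤ max (c(G), max_i c(G_i))` fails in general. -/
theorem exists_112_copwin_pg :
    ∃ 𝒢 : PeriodicGraph (Fin 9),
      𝒢.p = 9 ∧
      (∀ t, IsPathGraph (𝒢.snap t)) ∧
      (∃ v : Fin 9, ∀ w, w ≠ v → 𝒢.footprint.Adj v w) ∧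
      copNumberS 𝒢.footprint = 1 ∧
      (∀ t, copNumberS (𝒢.snap t) = 1) ∧
      𝒢.copNumber = 2 := by
  refine ⟨PG16.GG, rfl, fun t => PG16.isPath_P (PG16.τn t), ⟨8, PG16.footprint_univ⟩,
    ?_, ?_, ?_⟩
  · exact PG16.copNumber_eq_one _
      (PG16.copsWin_one_of_universal _ 8 PG16.footprint_univ) (PG16.not_copsWin_zero _)
  · exact fun t => PG16.copNumber_eq_one _
      (PG16.copsWin_one_of_path _ (PG16.isPath_P (PG16.τn t))) (PG16.not_copsWin_zero _)
  · exact PG16.copNumber_eq_two _ PG16.copsWin_two PG16.not_copsWin_one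
      (PG16.not_copsWin_zero _)
end

section
/- There exists a periodic graph 𝒢 such that c(𝒢) = 1 while c(G) = 2 and every snapshot has cop number 2; hence the inequality min(c(G), min_i c(G_i)) ≤ c(𝒢) is false. Concretely: let G be the bowtie of two 4-cycles sharing a cut-vertex v; let G_0 = G_1 = G_2 be G minus one edge of the first 4-cycle and G_3 = G_4 = G_5 be G minus one edge of the second 4-cycle. Then G and all six snapshots are 2-copwin but a single cop starting on v wins on 𝒢 = ⟨G_0,…,G_5⟩. -/
/-- The bowtie: two 4-cycles `(0,1,2,3)` and `(0,4,5,6)` sharing the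
cut-vertex `0`. -/
def bowtie : SimpleGraph (Fin 7) :=
  SimpleGraph.fromRel (fun x y =>
    ((x, y) ∈ ([(0, 1), (1, 2), (2, 3), (3, 0), (0, 4), (4, 5), (5, 6), (6, 0)] :
      List (Fin 7 × Fin 7))))

/-- The bowtie minus the edge `{1,2}` of the first 4-cycle. -/
def bowA : SimpleGraph (Fin 7) :=
  SimpleGraph.fromRel (fun x y =>
    ((x, y) ∈ ([(0, 1), (2, 3), (3, 0), (0, 4), (4, 5), (5, 6), (6, 0)] :
      List (Fin 7 × Fin 7))))

/-- The bowtie minus the edge `{4,5}` of the second 4-cycle. -/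
def bowB : SimpleGraph (Fin 7) :=
  SimpleGraph.fromRel (fun x y =>
    ((x, y) ∈ ([(0, 1), (1, 2), (2, 3), (3, 0), (0, 4), (5, 6), (6, 0)] :
      List (Fin 7 × Fin 7))))

/-- The periodic graph `⟨G_0,…,G_5⟩` with `G_0 = G_1 = G_2 = bowA` and
`G_3 = G_4 = G_5 = bowB`. -/
def bowPG : PeriodicGraph (Fin 7) where
  p := 6
  p_pos := by norm_num
  snap t := if t % 6 < 3 then bowA else bowB
  periodic t := by
    show (if (t + 6) % 6 < 3 then bowA else bowB) = if t % 6 < 3 then bowA else bowB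
    rw [Nat.add_mod_right]

-- test basics
open PeriodicGraph

lemma mem_cN {V : Type*} {G : SimpleGraph V} {u x : V} :
    x ∈ cN G u ↔ x = u ∨ G.Adj u x := by
  simp [cN, Set.mem_insert_iff, Set.mem_setOf_eq]

instance instDecAdjBowtie : DecidableRel bowtie.Adj := fun a b =>
  decidable_of_iff _ (SimpleGraph.fromRel_adj _ a b).symm

instance instDecAdjBowA : DecidableRel bowA.Adj := fun a b =>
  decidable_of_iff _ (SimpleGraph.fromRel_adj _ a b).symm

instance instDecAdjBowB : DecidableRel bowB.Adj := fun a b =>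
  decidable_of_iff _ (SimpleGraph.fromRel_adj _ a b).symm

instance instDecMemCN {V : Type*} [DecidableEq V] (G : SimpleGraph V) [DecidableRel G.Adj]
    (u : V) : DecidablePred (· ∈ cN G u) := fun x => decidable_of_iff _ mem_cN.symm

example : ∀ x : Fin 7, x ∈ cN bowtie (2:Fin 7) → x = 1 ∨ x = 2 ∨ x = 3 := by decide
example : ∀ x : Fin 7, x ∉ cN bowA (0:Fin 7) → x = 2 ∨ x = 5 := by decide
example : (3:Fin 7) ∈ cN bowA 0 := by decide
lemma snap_bowPG (t : ℕ) : bowPG.snap t = if t % 6 < 3 then bowA else bowB := rfl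

instance instDecAdjSnap (t : ℕ) : DecidableRel (bowPG.snap t).Adj := fun a b =>
  if h : t % 6 < 3 then
    decidable_of_iff (bowA.Adj a b) (by rw [snap_bowPG, if_pos h])
  else
    decidable_of_iff (bowB.Adj a b) (by rw [snap_bowPG, if_neg h])

lemma snap_static {V : Type*} (G : SimpleGraph V) (t : ℕ) :
    (PeriodicGraph.ofStatic G).snap t = G := rfl

/-- sweep step for the two-cop strategy -/
def step2 : Fin 7 → Fin 7 → Fin 7 := fun c r =>
  if c = 0 then (if r = 2 then 3 else if r = 5 then 6 else 0)
  else if c = 3 then 2 else if c = 6 then 5 else c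

def sigma2 (G : SimpleGraph (Fin 7)) [DecidableRel G.Adj] :
    CopStrategy (PeriodicGraph.ofStatic G) 2 where
  init := ![0, 0]
  move := fun _ c r =>
    ![c 0, if r ∈ cN G (c 1) then r
           else if step2 (c 1) r ∈ cN G (c 1) then step2 (c 1) r else c 1]

lemma sigma2_legal (G : SimpleGraph (Fin 7)) [DecidableRel G.Adj] : (sigma2 G).Legal := by
  intro t c r i
  fin_cases i
  · exact Set.mem_insert _ _
  · show (if r ∈ cN G (c 1) then r
           else if step2 (c 1) r ∈ cN G (c 1) then step2 (c 1) r else c 1) ∈ cN G (c 1)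
    split_ifs with h1 h2
    · exact h1
    · exact h2
    · exact Set.mem_insert _ _
lemma sigma2_move_catch (G : SimpleGraph (Fin 7)) [DecidableRel G.Adj] (t : ℕ)
    (c : Fin 2 → Fin 7) (r : Fin 7) (h : r ∈ cN G (c 1)) :
    (sigma2 G).move t c r 1 = r := by
  simp [sigma2, h]

example (ρ : RobStrategy (PeriodicGraph.ofStatic bowtie) 2) :
    (play (sigma2 bowtie) ρ 2).1
      = (sigma2 bowtie).move 1 (play (sigma2 bowtie) ρ 1).1 (play (sigma2 bowtie) ρ 1).2 := rfl

example : ((sigma2 bowtie).move 1 ((sigma2 bowtie).move 0 ![0,0] 2) 2) 1 = 2 := by decide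

example (ρ : RobStrategy (PeriodicGraph.ofStatic bowtie) 2) (hρ : ρ.Legal) :
    (play (sigma2 bowtie) ρ 1).2 ∈ cN bowtie ((play (sigma2 bowtie) ρ 1).1 0) → True := by
  intro; trivial

example (ρ : RobStrategy (PeriodicGraph.ofStatic bowtie) 2) (hρ : ρ.Legal) :
    (play (sigma2 bowtie) ρ 1).2 ∈ cN bowtie ((play (sigma2 bowtie) ρ 0).2) := hρ 0 _ _
lemma copswin2_bowtie : (PeriodicGraph.ofStatic bowtie).CopsWin 2 := by
  classical
  refine ⟨sigma2 bowtie, sigma2_legal _, fun ρ hρ => ?_⟩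
  have e0c : (play (sigma2 bowtie) ρ 0).1 = ![0,0] := rfl
  have e1c : (play (sigma2 bowtie) ρ 1).1
      = (sigma2 bowtie).move 0 (play (sigma2 bowtie) ρ 0).1 (play (sigma2 bowtie) ρ 0).2 := rfl
  have cover : ∀ x : Fin 7, x ∈ cN bowtie 0 ∨ x = 2 ∨ x = 5 := by decide
  rcases cover ((play (sigma2 bowtie) ρ 0).2) with h | h | h
  · refine ⟨0, 1, Or.inr ?_⟩
    rw [e1c, e0c, sigma2_move_catch]
    simpa using h
  · rw [e0c, h] at e1c
    have hr1 : (play (sigma2 bowtie) ρ 1).2 ∈ cN bowtie ((play (sigma2 bowtie) ρ 0).2) :=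
      hρ 0 _ _
    rw [h] at hr1
    have m2 : ∀ x : Fin 7, x ∈ cN bowtie 2 → x = 1 ∨ x = 2 ∨ x = 3 := by decide
    have e2c : (play (sigma2 bowtie) ρ 2).1
        = (sigma2 bowtie).move 1 (play (sigma2 bowtie) ρ 1).1 (play (sigma2 bowtie) ρ 1).2 := rfl
    rcases m2 _ hr1 with h1 | h1 | h1
    · first
      | exact absurd (h1 ▸ hr1) (by decide)
      | · rw [e1c, h1] at e2c
          have hr2 : (play (sigma2 bowtie) ρ 2).2 ∈ cN bowtie ((play (sigma2 bowtie) ρ 1).2) :=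
            hρ 1 _ _
          rw [h1] at hr2
          have m1 : ∀ x : Fin 7, x ∈ cN bowtie 1 → x = 0 ∨ x = 1 ∨ x = 2 := by decide
          rcases m1 _ hr2 with h2 | h2 | h2
          · exact ⟨2, 0, Or.inl (by rw [h2, e2c]; decide)⟩
          · refine ⟨2, 1, Or.inr ?_⟩
            have e3c : (play (sigma2 bowtie) ρ 3).1
                = (sigma2 bowtie).move 2 (play (sigma2 bowtie) ρ 2).1
                    (play (sigma2 bowtie) ρ 2).2 := rfl
            rw [e3c, e2c, h2]; decide
          · exact ⟨2, 1, Or.inl (by rw [h2, e2c]; decide)⟩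
    · refine ⟨1, 1, Or.inr ?_⟩
      rw [e2c, e1c, h1]; decide
    · exact ⟨1, 1, Or.inl (by rw [h1, e1c]; decide)⟩
  · rw [e0c, h] at e1c
    have hr1 : (play (sigma2 bowtie) ρ 1).2 ∈ cN bowtie ((play (sigma2 bowtie) ρ 0).2) :=
      hρ 0 _ _
    rw [h] at hr1
    have m5 : ∀ x : Fin 7, x ∈ cN bowtie 5 → x = 4 ∨ x = 5 ∨ x = 6 := by decide
    have e2c : (play (sigma2 bowtie) ρ 2).1
        = (sigma2 bowtie).move 1 (play (sigma2 bowtie) ρ 1).1 (play (sigma2 bowtie) ρ 1).2 := rfl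
    rcases m5 _ hr1 with h1 | h1 | h1
    · first
      | exact absurd (h1 ▸ hr1) (by decide)
      | · rw [e1c, h1] at e2c
          have hr2 : (play (sigma2 bowtie) ρ 2).2 ∈ cN bowtie ((play (sigma2 bowtie) ρ 1).2) :=
            hρ 1 _ _
          rw [h1] at hr2
          have m4 : ∀ x : Fin 7, x ∈ cN bowtie 4 → x = 0 ∨ x = 4 ∨ x = 5 := by decide
          rcases m4 _ hr2 with h2 | h2 | h2
          · exact ⟨2, 0, Or.inl (by rw [h2, e2c]; decide)⟩
          · refine ⟨2, 1, Or.inr ?_⟩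
            have e3c : (play (sigma2 bowtie) ρ 3).1
                = (sigma2 bowtie).move 2 (play (sigma2 bowtie) ρ 2).1
                    (play (sigma2 bowtie) ρ 2).2 := rfl
            rw [e3c, e2c, h2]; decide
          · exact ⟨2, 1, Or.inl (by rw [h2, e2c]; decide)⟩
    · refine ⟨1, 1, Or.inr ?_⟩
      rw [e2c, e1c, h1]; decide
    · exact ⟨1, 1, Or.inl (by rw [h1, e1c]; decide)⟩

lemma copswin2_bowA : (PeriodicGraph.ofStatic bowA).CopsWin 2 := by
  classical
  refine ⟨sigma2 bowA, sigma2_legal _, fun ρ hρ => ?_⟩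
  have e0c : (play (sigma2 bowA) ρ 0).1 = ![0,0] := rfl
  have e1c : (play (sigma2 bowA) ρ 1).1
      = (sigma2 bowA).move 0 (play (sigma2 bowA) ρ 0).1 (play (sigma2 bowA) ρ 0).2 := rfl
  have cover : ∀ x : Fin 7, x ∈ cN bowA 0 ∨ x = 2 ∨ x = 5 := by decide
  rcases cover ((play (sigma2 bowA) ρ 0).2) with h | h | h
  · refine ⟨0, 1, Or.inr ?_⟩
    rw [e1c, e0c, sigma2_move_catch]
    simpa using h
  · rw [e0c, h] at e1c
    have hr1 : (play (sigma2 bowA) ρ 1).2 ∈ cN bowA ((play (sigma2 bowA) ρ 0).2) :=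
      hρ 0 _ _
    rw [h] at hr1
    have m2 : ∀ x : Fin 7, x ∈ cN bowA 2 → x = 1 ∨ x = 2 ∨ x = 3 := by decide
    have e2c : (play (sigma2 bowA) ρ 2).1
        = (sigma2 bowA).move 1 (play (sigma2 bowA) ρ 1).1 (play (sigma2 bowA) ρ 1).2 := rfl
    rcases m2 _ hr1 with h1 | h1 | h1
    · first
      | exact absurd (h1 ▸ hr1) (by decide)
      | · rw [e1c, h1] at e2c
          have hr2 : (play (sigma2 bowA) ρ 2).2 ∈ cN bowA ((play (sigma2 bowA) ρ 1).2) :=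
            hρ 1 _ _
          rw [h1] at hr2
          have m1 : ∀ x : Fin 7, x ∈ cN bowA 1 → x = 0 ∨ x = 1 ∨ x = 2 := by decide
          rcases m1 _ hr2 with h2 | h2 | h2
          · exact ⟨2, 0, Or.inl (by rw [h2, e2c]; decide)⟩
          · refine ⟨2, 1, Or.inr ?_⟩
            have e3c : (play (sigma2 bowA) ρ 3).1
                = (sigma2 bowA).move 2 (play (sigma2 bowA) ρ 2).1
                    (play (sigma2 bowA) ρ 2).2 := rfl
            rw [e3c, e2c, h2]; decide
          · exact ⟨2, 1, Or.inl (by rw [h2, e2c]; decide)⟩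
    · refine ⟨1, 1, Or.inr ?_⟩
      rw [e2c, e1c, h1]; decide
    · exact ⟨1, 1, Or.inl (by rw [h1, e1c]; decide)⟩
  · rw [e0c, h] at e1c
    have hr1 : (play (sigma2 bowA) ρ 1).2 ∈ cN bowA ((play (sigma2 bowA) ρ 0).2) :=
      hρ 0 _ _
    rw [h] at hr1
    have m5 : ∀ x : Fin 7, x ∈ cN bowA 5 → x = 4 ∨ x = 5 ∨ x = 6 := by decide
    have e2c : (play (sigma2 bowA) ρ 2).1
        = (sigma2 bowA).move 1 (play (sigma2 bowA) ρ 1).1 (play (sigma2 bowA) ρ 1).2 := rfl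
    rcases m5 _ hr1 with h1 | h1 | h1
    · first
      | exact absurd (h1 ▸ hr1) (by decide)
      | · rw [e1c, h1] at e2c
          have hr2 : (play (sigma2 bowA) ρ 2).2 ∈ cN bowA ((play (sigma2 bowA) ρ 1).2) :=
            hρ 1 _ _
          rw [h1] at hr2
          have m4 : ∀ x : Fin 7, x ∈ cN bowA 4 → x = 0 ∨ x = 4 ∨ x = 5 := by decide
          rcases m4 _ hr2 with h2 | h2 | h2
          · exact ⟨2, 0, Or.inl (by rw [h2, e2c]; decide)⟩
          · refine ⟨2, 1, Or.inr ?_⟩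
            have e3c : (play (sigma2 bowA) ρ 3).1
                = (sigma2 bowA).move 2 (play (sigma2 bowA) ρ 2).1
                    (play (sigma2 bowA) ρ 2).2 := rfl
            rw [e3c, e2c, h2]; decide
          · exact ⟨2, 1, Or.inl (by rw [h2, e2c]; decide)⟩
    · refine ⟨1, 1, Or.inr ?_⟩
      rw [e2c, e1c, h1]; decide
    · exact ⟨1, 1, Or.inl (by rw [h1, e1c]; decide)⟩

lemma copswin2_bowB : (PeriodicGraph.ofStatic bowB).CopsWin 2 := by
  classical
  refine ⟨sigma2 bowB, sigma2_legal _, fun ρ hρ => ?_⟩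
  have e0c : (play (sigma2 bowB) ρ 0).1 = ![0,0] := rfl
  have e1c : (play (sigma2 bowB) ρ 1).1
      = (sigma2 bowB).move 0 (play (sigma2 bowB) ρ 0).1 (play (sigma2 bowB) ρ 0).2 := rfl
  have cover : ∀ x : Fin 7, x ∈ cN bowB 0 ∨ x = 2 ∨ x = 5 := by decide
  rcases cover ((play (sigma2 bowB) ρ 0).2) with h | h | h
  · refine ⟨0, 1, Or.inr ?_⟩
    rw [e1c, e0c, sigma2_move_catch]
    simpa using h
  · rw [e0c, h] at e1c
    have hr1 : (play (sigma2 bowB) ρ 1).2 ∈ cN bowB ((play (sigma2 bowB) ρ 0).2) :=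
      hρ 0 _ _
    rw [h] at hr1
    have m2 : ∀ x : Fin 7, x ∈ cN bowB 2 → x = 1 ∨ x = 2 ∨ x = 3 := by decide
    have e2c : (play (sigma2 bowB) ρ 2).1
        = (sigma2 bowB).move 1 (play (sigma2 bowB) ρ 1).1 (play (sigma2 bowB) ρ 1).2 := rfl
    rcases m2 _ hr1 with h1 | h1 | h1
    · first
      | exact absurd (h1 ▸ hr1) (by decide)
      | · rw [e1c, h1] at e2c
          have hr2 : (play (sigma2 bowB) ρ 2).2 ∈ cN bowB ((play (sigma2 bowB) ρ 1).2) :=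
            hρ 1 _ _
          rw [h1] at hr2
          have m1 : ∀ x : Fin 7, x ∈ cN bowB 1 → x = 0 ∨ x = 1 ∨ x = 2 := by decide
          rcases m1 _ hr2 with h2 | h2 | h2
          · exact ⟨2, 0, Or.inl (by rw [h2, e2c]; decide)⟩
          · refine ⟨2, 1, Or.inr ?_⟩
            have e3c : (play (sigma2 bowB) ρ 3).1
                = (sigma2 bowB).move 2 (play (sigma2 bowB) ρ 2).1
                    (play (sigma2 bowB) ρ 2).2 := rfl
            rw [e3c, e2c, h2]; decide
          · exact ⟨2, 1, Or.inl (by rw [h2, e2c]; decide)⟩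
    · refine ⟨1, 1, Or.inr ?_⟩
      rw [e2c, e1c, h1]; decide
    · exact ⟨1, 1, Or.inl (by rw [h1, e1c]; decide)⟩
  · rw [e0c, h] at e1c
    have hr1 : (play (sigma2 bowB) ρ 1).2 ∈ cN bowB ((play (sigma2 bowB) ρ 0).2) :=
      hρ 0 _ _
    rw [h] at hr1
    have m5 : ∀ x : Fin 7, x ∈ cN bowB 5 → x = 4 ∨ x = 5 ∨ x = 6 := by decide
    have e2c : (play (sigma2 bowB) ρ 2).1
        = (sigma2 bowB).move 1 (play (sigma2 bowB) ρ 1).1 (play (sigma2 bowB) ρ 1).2 := rfl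
    rcases m5 _ hr1 with h1 | h1 | h1
    · first
      | exact absurd (h1 ▸ hr1) (by decide)
      | · rw [e1c, h1] at e2c
          have hr2 : (play (sigma2 bowB) ρ 2).2 ∈ cN bowB ((play (sigma2 bowB) ρ 1).2) :=
            hρ 1 _ _
          rw [h1] at hr2
          have m4 : ∀ x : Fin 7, x ∈ cN bowB 4 → x = 0 ∨ x = 4 ∨ x = 5 := by decide
          rcases m4 _ hr2 with h2 | h2 | h2
          · exact ⟨2, 0, Or.inl (by rw [h2, e2c]; decide)⟩
          · refine ⟨2, 1, Or.inr ?_⟩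
            have e3c : (play (sigma2 bowB) ρ 3).1
                = (sigma2 bowB).move 2 (play (sigma2 bowB) ρ 2).1
                    (play (sigma2 bowB) ρ 2).2 := rfl
            rw [e3c, e2c, h2]; decide
          · exact ⟨2, 1, Or.inl (by rw [h2, e2c]; decide)⟩
    · refine ⟨1, 1, Or.inr ?_⟩
      rw [e2c, e1c, h1]; decide
    · exact ⟨1, 1, Or.inl (by rw [h1, e1c]; decide)⟩

/-- Generic evasion certificate: one cop never wins if there is a map `f`
assigning to each cop position a safe robber position, compatible with all
snapshots. -/
lemma no_one_cop {V : Type*} (𝒢 : PeriodicGraph V) (f : V → V)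
    (hf1 : ∀ t c, f c ∉ cN (𝒢.snap t) c)
    (hf2 : ∀ t c c', c' ∈ cN (𝒢.snap t) c → f c' ∈ cN (𝒢.snap t) (f c)) :
    ¬ 𝒢.CopsWin 1 := by
  classical
  rintro ⟨σ, hσ, hwin⟩
  set ρ : RobStrategy 𝒢 1 :=
    { init := fun c => f (c 0)
      move := fun t c r => if f (c 0) ∈ cN (𝒢.snap t) r then f (c 0) else r } with hρdef
  have hρ : ρ.Legal := by
    intro t c r
    show (if f (c 0) ∈ cN (𝒢.snap t) r then f (c 0) else r) ∈ cN (𝒢.snap t) r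
    split_ifs with hh
    · exact hh
    · exact Set.mem_insert _ _
  have inv : ∀ t, (play σ ρ t).2 = f ((play σ ρ t).1 0) := by
    intro t
    induction t with
    | zero => rfl
    | succ t ih =>
      have hcop : (play σ ρ (t+1)).1 0 ∈ cN (𝒢.snap t) ((play σ ρ t).1 0) := hσ t _ _ 0
      have key : f ((play σ ρ (t+1)).1 0) ∈ cN (𝒢.snap t) ((play σ ρ t).2) := by
        rw [ih]; exact hf2 t _ _ hcop
      show (if f ((play σ ρ (t+1)).1 0) ∈ cN (𝒢.snap t) ((play σ ρ t).2)
            then f ((play σ ρ (t+1)).1 0) else (play σ ρ t).2)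
          = f ((play σ ρ (t+1)).1 0)
      rw [if_pos key]
  obtain ⟨t, i, hcap | hcap⟩ := hwin ρ hρ
  · have hi : i = 0 := Subsingleton.elim _ _
    subst hi
    rw [inv t] at hcap
    exact hf1 t ((play σ ρ t).1 0) (hcap ▸ Set.mem_insert _ _)
  · have hi : i = 0 := Subsingleton.elim _ _
    subst hi
    have hcop : (play σ ρ (t+1)).1 0 ∈ cN (𝒢.snap t) ((play σ ρ t).1 0) := hσ t _ _ 0
    rw [hcap, inv t] at hcop
    exact hf1 t _ hcop

/-- With zero cops the robber is never captured. -/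
lemma no_zero_cop {V : Type*} [Inhabited V] (𝒢 : PeriodicGraph V) : ¬ 𝒢.CopsWin 0 := by
  rintro ⟨σ, hσ, hwin⟩
  obtain ⟨t, i, _⟩ := hwin ⟨fun _ => default, fun _ _ r => r⟩ (fun _ _ r => Set.mem_insert _ _)
  exact i.elim0

def fB : Fin 7 → Fin 7 := ![2, 3, 0, 1, 2, 2, 2]
def fA : Fin 7 → Fin 7 := ![5, 5, 5, 5, 6, 0, 4]

lemma not_one_bowtie : ¬ (PeriodicGraph.ofStatic bowtie).CopsWin 1 :=
  no_one_cop _ fB (fun t c => by rw [snap_static]; revert c; decide)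
    (fun t c c' => by rw [snap_static]; revert c c'; decide)

lemma not_one_bowA : ¬ (PeriodicGraph.ofStatic bowA).CopsWin 1 :=
  no_one_cop _ fA (fun t c => by rw [snap_static]; revert c; decide)
    (fun t c c' => by rw [snap_static]; revert c c'; decide)

lemma not_one_bowB : ¬ (PeriodicGraph.ofStatic bowB).CopsWin 1 :=
  no_one_cop _ fB (fun t c => by rw [snap_static]; revert c; decide)
    (fun t c c' => by rw [snap_static]; revert c c'; decide)
lemma snap_cases (t : ℕ) : bowPG.snap t = bowA ∨ bowPG.snap t = bowB := by
  rw [snap_bowPG]; split_ifs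
  · exact Or.inl rfl
  · exact Or.inr rfl

/-- The single-cop strategy on the periodic bowtie: wait at the cut vertex `0`,
grab any adjacent robber, and at the right phase start the two-step sweep into
the currently broken cycle. -/
def sigmaP : CopStrategy bowPG 1 where
  init := ![0]
  move := fun t c r =>
    ![ if r ∈ cN (bowPG.snap t) (c 0) then r
       else if c 0 = 0 ∧ r = 2 ∧ t % 6 = 0 then 3
       else if c 0 = 0 ∧ r = 5 ∧ t % 6 = 3 then 6
       else if c 0 = 3 ∨ c 0 = 6 then 0
       else c 0 ]

lemma sigmaP_legal : sigmaP.Legal := by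
  intro t c r i
  fin_cases i
  show (if r ∈ cN (bowPG.snap t) (c 0) then r
       else if c 0 = 0 ∧ r = 2 ∧ t % 6 = 0 then 3
       else if c 0 = 0 ∧ r = 5 ∧ t % 6 = 3 then 6
       else if c 0 = 3 ∨ c 0 = 6 then 0
       else c 0) ∈ cN (bowPG.snap t) (c 0)
  split_ifs with h1 h2 h3 h4
  · exact h1
  · rw [h2.1]; rcases snap_cases t with h | h <;> rw [h] <;> decide
  · rw [h3.1]; rcases snap_cases t with h | h <;> rw [h] <;> decide
  · rcases h4 with h4 | h4 <;> rw [h4] <;> rcases snap_cases t with h | h <;> rw [h] <;> decide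
  · exact Set.mem_insert _ _

lemma sigmaP_move_catch (t : ℕ) (c : Fin 1 → Fin 7) (r : Fin 7)
    (h : r ∈ cN (bowPG.snap t) (c 0)) : sigmaP.move t c r 0 = r := by
  show (![if r ∈ cN (bowPG.snap t) (c 0) then r
       else if c 0 = 0 ∧ r = 2 ∧ t % 6 = 0 then 3
       else if c 0 = 0 ∧ r = 5 ∧ t % 6 = 3 then 6
       else if c 0 = 3 ∨ c 0 = 6 then 0
       else c 0] : Fin 1 → Fin 7) 0 = r
  simp only [Matrix.cons_val_zero]
  rw [if_pos h]

lemma copswin1_bowPG : bowPG.CopsWin 1 := by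
  classical
  refine ⟨sigmaP, sigmaP_legal, fun ρ hρ => ?_⟩
  by_contra hnc
  rw [Captured] at hnc
  push_neg at hnc
  have s0 : bowPG.snap 0 = bowA := rfl
  have s1 : bowPG.snap 1 = bowA := rfl
  have s2 : bowPG.snap 2 = bowA := rfl
  have s3 : bowPG.snap 3 = bowB := rfl
  have e0c : (play sigmaP ρ 0).1 = ![0] := rfl
  have e1c : (play sigmaP ρ 1).1
      = sigmaP.move 0 (play sigmaP ρ 0).1 (play sigmaP ρ 0).2 := rfl
  have e2c : (play sigmaP ρ 2).1
      = sigmaP.move 1 (play sigmaP ρ 1).1 (play sigmaP ρ 1).2 := rfl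
  have e3c : (play sigmaP ρ 3).1
      = sigmaP.move 2 (play sigmaP ρ 2).1 (play sigmaP ρ 2).2 := rfl
  have e4c : (play sigmaP ρ 4).1
      = sigmaP.move 3 (play sigmaP ρ 3).1 (play sigmaP ρ 3).2 := rfl
  have e5c : (play sigmaP ρ 5).1
      = sigmaP.move 4 (play sigmaP ρ 4).1 (play sigmaP ρ 4).2 := rfl
  -- the robber's start must be a non-neighbour of 0, i.e. 2 or 5
  have hr0 : (play sigmaP ρ 0).2 ∉ cN (bowPG.snap 0) 0 := by
    intro hmem
    apply (hnc 0 0).2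
    rw [e1c, e0c]
    exact sigmaP_move_catch 0 ![0] _ (by simpa using hmem)
  rw [s0] at hr0
  have cover : ∀ x : Fin 7, x ∉ cN bowA 0 → x = 2 ∨ x = 5 := by decide
  have mA2 : ∀ x : Fin 7, x ∈ cN bowA 2 → x = 2 ∨ x = 3 := by decide
  have mA5 : ∀ x : Fin 7, x ∈ cN bowA 5 → x = 4 ∨ x = 5 ∨ x = 6 := by decide
  have mB5 : ∀ x : Fin 7, x ∈ cN bowB 5 → x = 5 ∨ x = 6 := by decide
  rcases cover _ hr0 with h0 | h0
  · -- robber starts at 2 : immediate sweep 0 → 3 → 2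
    rw [e0c, h0] at e1c
    have hr1 : (play sigmaP ρ 1).2 ∈ cN (bowPG.snap 0) ((play sigmaP ρ 0).2) := hρ 0 _ _
    rw [h0, s0] at hr1
    rcases mA2 _ hr1 with h1 | h1
    · exact (hnc 1 0).2 (by rw [e2c, e1c, h1]; decide)
    · exact (hnc 1 0).1 (by rw [e1c, h1]; decide)
  ·
    rw [e0c, h0] at e1c
    have hr1 : (play sigmaP ρ 1).2 ∈ cN (bowPG.snap 0) ((play sigmaP ρ 0).2) := hρ 0 _ _
    rw [h0, s0] at hr1
    rcases mA5 _ hr1 with h1 | h1 | h1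
    · exact (hnc 1 0).2 (by rw [e2c, e1c, h1]; decide)
    · rw [e1c, h1] at e2c
      have hr2 : (play sigmaP ρ 2).2 ∈ cN (bowPG.snap 1) ((play sigmaP ρ 1).2) := hρ 1 _ _
      rw [h1, s1] at hr2
      rcases mA5 _ hr2 with h2 | h2 | h2
      · exact (hnc 2 0).2 (by rw [e3c, e2c, h2]; decide)
      · rw [e2c, h2] at e3c
        have hr3 : (play sigmaP ρ 3).2 ∈ cN (bowPG.snap 2) ((play sigmaP ρ 2).2) := hρ 2 _ _
        rw [h2, s2] at hr3
        rcases mA5 _ hr3 with h3 | h3 | h3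
        · exact (hnc 3 0).2 (by rw [e4c, e3c, h3]; decide)
        · rw [e3c, h3] at e4c
          have hr4 : (play sigmaP ρ 4).2 ∈ cN (bowPG.snap 3) ((play sigmaP ρ 3).2) := hρ 3 _ _
          rw [h3, s3] at hr4
          rcases mB5 _ hr4 with h4 | h4
          · exact (hnc 4 0).2 (by rw [e5c, e4c, h4]; decide)
          · exact (hnc 4 0).1 (by rw [e4c, h4]; decide)
        · exact (hnc 3 0).2 (by rw [e4c, e3c, h3]; decide)
      · exact (hnc 2 0).2 (by rw [e3c, e2c, h2]; decide)
    · exact (hnc 1 0).2 (by rw [e2c, e1c, h1]; decide)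
lemma footprint_bowPG : bowPG.footprint = bowtie := by
  ext a b
  simp only [PeriodicGraph.footprint, SimpleGraph.iSup_adj]
  constructor
  · rintro ⟨t, ht⟩
    rcases snap_cases t with h | h <;> rw [h] at ht
    · exact (by decide : ∀ x y : Fin 7, bowA.Adj x y → bowtie.Adj x y) a b ht
    · exact (by decide : ∀ x y : Fin 7, bowB.Adj x y → bowtie.Adj x y) a b ht
  · intro h
    rcases (by decide : ∀ x y : Fin 7, bowtie.Adj x y → bowA.Adj x y ∨ bowB.Adj x y) a b h
      with h' | h'
    · exact ⟨0, by rw [(rfl : bowPG.snap 0 = bowA)]; exact h'⟩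
    · exact ⟨3, by rw [(rfl : bowPG.snap 3 = bowB)]; exact h'⟩

lemma sInf_eq_one {S : Set ℕ} (h1 : 1 ∈ S) (h0 : 0 ∉ S) : sInf S = 1 := by
  have hle := Nat.sInf_le h1
  have hmem := Nat.sInf_mem (Set.nonempty_of_mem h1)
  have h : sInf S = 0 ∨ sInf S = 1 := by omega
  rcases h with h | h
  · rw [h] at hmem; exact absurd hmem h0
  · exact h

lemma sInf_eq_two {S : Set ℕ} (h2 : 2 ∈ S) (h1 : 1 ∉ S) (h0 : 0 ∉ S) : sInf S = 2 := by
  have hle := Nat.sInf_le h2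
  have hmem := Nat.sInf_mem (Set.nonempty_of_mem h2)
  have h : sInf S = 0 ∨ sInf S = 1 ∨ sInf S = 2 := by omega
  rcases h with h | h | h
  · rw [h] at hmem; exact absurd hmem h0
  · rw [h] at hmem; exact absurd hmem h1
  · exact h


/-- The bowtie periodic graph has footprint and snapshots of cop
number 2, yet a single cop wins; hence `min (c(G), min_i c(G_i)) ≤ c(𝒢)` fails
in general. -/
theorem bowPG_221_copwin :
    bowPG.footprint = bowtie ∧
    copNumberS bowtie = 2 ∧
    (∀ t, copNumberS (bowPG.snap t) = 2) ∧
    bowPG.copNumber = 1 := by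
  refine ⟨footprint_bowPG, ?_, ?_, ?_⟩
  · exact sInf_eq_two copswin2_bowtie not_one_bowtie (no_zero_cop _)
  · intro t
    rcases snap_cases t with h | h <;> rw [h]
    · exact sInf_eq_two copswin2_bowA not_one_bowA (no_zero_cop _)
    · exact sInf_eq_two copswin2_bowB not_one_bowB (no_zero_cop _)
  · exact sInf_eq_one copswin1_bowPG (no_zero_cop _)
end
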